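/- arXiv:math/0009109 — 2 statements merged into one kernel-verified Lean document; each statement's English description precedes it below -/
import Mathlib

section
/- Fix an integer $b \ge 0$. Let $G(t,q)$ be Göttsche's series $\prod_{m=1}^{\infty} (1-t^{2m-2}q^m)^{-1}(1-t^{2m}q^m)^{-b}(1-t^{2m+2}q^m)^{-1} \in \mathbb{Q}[[t,q]]$ and let $P(t) = \prod_{m=1}^{\infty}(1-t^{2m})^{-(b+1)} \cdot \prod_{m=2}^{\infty}(1-t^{2m})^{-1} \in \mathbb{Q}[[t]]$. Then for all integers $k, n$ with $0 \le k \le n$, the coefficient of $t^k q^n$ in $G(t,q)$ equals the coefficient of $t^k$ in $P(t)$. -/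
/-- The variable `t` in `ℚ[[t,q]]`. -/
noncomputable def tV : MvPowerSeries (Fin 2) ℚ := MvPowerSeries.X 0

/-- The variable `q` in `ℚ[[t,q]]`. -/
noncomputable def qV : MvPowerSeries (Fin 2) ℚ := MvPowerSeries.X 1

/-- The infinite product `∏_{m=1}^∞ f m` of power series in `ℚ[[t,q]]`, each
factor being `1` plus terms of total degree `≥ m`: the coefficient at a
multidegree `d` is computed from the (stable) finite partial product over
`1 ≤ m ≤ |d|`. -/
noncomputable def iProd2 (f : ℕ → MvPowerSeries (Fin 2) ℚ) :
    MvPowerSeries (Fin 2) ℚ :=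
  fun d => MvPowerSeries.coeff d (∏ m ∈ Finset.Icc 1 (d 0 + d 1), f m)

/-- Göttsche's series
`G(t,q) = ∏_{m=1}^∞ (1-t^{2m-2}q^m)^{-1}(1-t^{2m}q^m)^{-b}(1-t^{2m+2}q^m)^{-1}`. -/
noncomputable def Gser (b : ℕ) : MvPowerSeries (Fin 2) ℚ :=
  iProd2 (fun m => (1 - tV ^ (2 * m - 2) * qV ^ m)⁻¹ *
    ((1 - tV ^ (2 * m) * qV ^ m)⁻¹) ^ b *
    (1 - tV ^ (2 * m + 2) * qV ^ m)⁻¹)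

/-- The stable series
`P(t) = ∏_{m=1}^∞ (1-t^{2m})^{-(b+1)} ⬝ ∏_{m=2}^∞ (1-t^{2m})^{-1}` in
`ℚ[[t]]`, whose degree-`k` coefficient is computed from the (stable) finite
partial product over `1 ≤ m ≤ k`. -/
noncomputable def Pser (b : ℕ) : PowerSeries ℚ :=
  PowerSeries.mk fun k => PowerSeries.coeff k
    (∏ m ∈ Finset.Icc 1 k,
      (((1 - (PowerSeries.X : PowerSeries ℚ) ^ (2 * m))⁻¹) ^ (b + 1) *
        if 2 ≤ m then (1 - (PowerSeries.X : PowerSeries ℚ) ^ (2 * m))⁻¹ else 1))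

open Finset

namespace Stmt5Aux

noncomputable section

/-- The multidegree `(k, j)`. -/
def D (k j : ℕ) : Fin 2 →₀ ℕ := Finsupp.single 0 k + Finsupp.single 1 j

@[simp] lemma D_apply0 (k j : ℕ) : D k j 0 = k := by
  simp [D, Finsupp.single_apply]

@[simp] lemma D_apply1 (k j : ℕ) : D k j 1 = j := by
  simp [D, Finsupp.single_apply]

lemma eq_D (d : Fin 2 →₀ ℕ) : d = D (d 0) (d 1) := by
  ext i
  fin_cases i
  · simp
  · simp

lemma D_add (a b c d : ℕ) : D a b + D c d = D (a + c) (b + d) := by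
  ext i
  fin_cases i
  · simp
  · simp

/-- The monomial `t^a q^c`. -/
def M (a c : ℕ) : MvPowerSeries (Fin 2) ℚ := tV ^ a * qV ^ c

lemma M_eq (a c : ℕ) : M a c = MvPowerSeries.monomial (D a c) 1 := by
  rw [M, tV, qV, MvPowerSeries.X_pow_eq, MvPowerSeries.X_pow_eq,
    MvPowerSeries.monomial_mul_monomial, one_mul]
  rfl

lemma constCoeff_one_sub_M (a c : ℕ) (hc : 1 ≤ c) :
    MvPowerSeries.constantCoeff (1 - M a c) ≠ 0 := by
  have h : (MvPowerSeries.coeff 0) (M a c) = 0 := by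
    rw [M_eq, MvPowerSeries.coeff_monomial, if_neg]
    intro h
    have := congrArg (fun f => f 1) h
    simp at this
    omega
  rw [← MvPowerSeries.coeff_zero_eq_constantCoeff_apply, map_sub, h,
    MvPowerSeries.coeff_zero_one]
  norm_num

/-- `(1 - t^a q^c)⁻¹`. -/
def Fm (a c : ℕ) : MvPowerSeries (Fin 2) ℚ := (1 - M a c)⁻¹

lemma Fm_inv_mul (a c : ℕ) (hc : 1 ≤ c) : (1 - M a c) * Fm a c = 1 :=
  MvPowerSeries.mul_inv_cancel _ (constCoeff_one_sub_M a c hc)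

lemma Fm_rec (a c : ℕ) (hc : 1 ≤ c) : Fm a c = 1 + M a c * Fm a c := by
  have h := Fm_inv_mul a c hc
  rw [sub_mul, one_mul, sub_eq_iff_eq_add] at h
  exact h

lemma coeff_Fm (a c : ℕ) (hc : 1 ≤ c) (d : Fin 2 →₀ ℕ) :
    MvPowerSeries.coeff d (Fm a c)
      = (if d = 0 then (1 : ℚ) else 0)
        + (if D a c ≤ d then MvPowerSeries.coeff (d - D a c) (Fm a c) else 0) := by
  conv_lhs => rw [Fm_rec a c hc]
  rw [map_add, MvPowerSeries.coeff_one, M_eq, MvPowerSeries.coeff_monomial_mul]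
  simp only [one_mul]

/-- The support condition: `q`-degree at most `t`-degree. -/
def Supp (F : MvPowerSeries (Fin 2) ℚ) : Prop :=
  ∀ d : Fin 2 →₀ ℕ, MvPowerSeries.coeff d F ≠ 0 → d 1 ≤ d 0

lemma supp_one : Supp 1 := by
  intro d hd
  rw [MvPowerSeries.coeff_one] at hd
  by_cases h : d = 0
  · subst h; simp
  · exact absurd (if_neg h) hd

lemma supp_mul {F G : MvPowerSeries (Fin 2) ℚ} (hF : Supp F) (hG : Supp G) :
    Supp (F * G) := by
  classical
  intro d hd
  rw [MvPowerSeries.coeff_mul] at hd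
  obtain ⟨p, hp, hne⟩ := Finset.exists_ne_zero_of_sum_ne_zero hd
  rw [Finset.HasAntidiagonal.mem_antidiagonal] at hp
  have h1 := hF _ (left_ne_zero_of_mul hne)
  have h2 := hG _ (right_ne_zero_of_mul hne)
  have e0 : p.1 0 + p.2 0 = d 0 := by rw [← hp]; simp
  have e1 : p.1 1 + p.2 1 = d 1 := by rw [← hp]; simp
  omega

lemma supp_pow {F : MvPowerSeries (Fin 2) ℚ} (hF : Supp F) (b : ℕ) : Supp (F ^ b) := by
  induction b with
  | zero => simpa using supp_one
  | succ b ih => rw [pow_succ]; exact supp_mul ih hF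

lemma supp_prod (s : Finset ℕ) (f : ℕ → MvPowerSeries (Fin 2) ℚ)
    (hf : ∀ m ∈ s, Supp (f m)) : Supp (∏ m ∈ s, f m) :=
  Finset.prod_induction f Supp (fun _ _ => supp_mul) supp_one hf

lemma supp_one_sub_M (a c : ℕ) (hca : c ≤ a) : Supp (1 - M a c) := by
  intro d hd
  rw [map_sub, MvPowerSeries.coeff_one, M_eq, MvPowerSeries.coeff_monomial] at hd
  by_cases h0 : d = 0
  · subst h0; simp
  · rw [if_neg h0] at hd
    by_cases h1 : d = D a c
    · subst h1; simpa using hca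
    · rw [if_neg h1] at hd
      simp at hd

lemma supp_Fm (a c : ℕ) (hca : c ≤ a) (hc : 1 ≤ c) : Supp (Fm a c) := by
  suffices h : ∀ N : ℕ, ∀ d : Fin 2 →₀ ℕ, d 1 ≤ N →
      MvPowerSeries.coeff d (Fm a c) ≠ 0 → d 1 ≤ d 0 by
    intro d hd
    exact h (d 1) d le_rfl hd
  intro N
  induction N with
  | zero => intro d h1 _; omega
  | succ N ih =>
    intro d h1 hd
    rw [coeff_Fm a c hc] at hd
    by_cases h0 : d = 0
    · subst h0; simp
    · rw [if_neg h0, zero_add] at hd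
      by_cases hle : D a c ≤ d
      · rw [if_pos hle] at hd
        have hc' : c ≤ d 1 := by
          have := (Finsupp.le_def.mp hle) 1
          simpa using this
        have ha' : a ≤ d 0 := by
          have := (Finsupp.le_def.mp hle) 0
          simpa using this
        have e1 : (d - D a c) 1 = d 1 - c := by
          rw [Finsupp.tsub_apply]; simp
        have e0 : (d - D a c) 0 = d 0 - a := by
          rw [Finsupp.tsub_apply]; simp
        have hsub := ih (d - D a c) (by omega) hd
        omega
      · rw [if_neg hle] at hd
        exact absurd rfl hd

/-- Formal specialization `q ↦ 1` (valid on the subring `Supp`). -/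
def Phi (F : MvPowerSeries (Fin 2) ℚ) : PowerSeries ℚ :=
  PowerSeries.mk fun k => ∑ j ∈ Finset.range (k + 1), MvPowerSeries.coeff (D k j) F

lemma coeff_Phi (F : MvPowerSeries (Fin 2) ℚ) (k : ℕ) :
    PowerSeries.coeff k (Phi F)
      = ∑ j ∈ Finset.range (k + 1), MvPowerSeries.coeff (D k j) F :=
  PowerSeries.coeff_mk _ _

lemma D_ne_zero (k j : ℕ) (h : k ≠ 0 ∨ j ≠ 0) : D k j ≠ 0 := by
  intro hD
  have h0 := congrArg (fun f => f 0) hD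
  have h1 := congrArg (fun f => f 1) hD
  simp at h0 h1
  tauto

lemma Phi_one : Phi 1 = 1 := by
  ext k
  rw [coeff_Phi, PowerSeries.coeff_one]
  rcases Nat.eq_zero_or_pos k with hk | hk
  · subst hk
    rw [if_pos rfl, Finset.sum_range_one, MvPowerSeries.coeff_one,
      if_pos (by ext i; fin_cases i <;> simp : D 0 0 = 0)]
  · rw [if_neg (by omega)]
    apply Finset.sum_eq_zero
    intro j hj
    rw [MvPowerSeries.coeff_one, if_neg (D_ne_zero k j (Or.inl (by omega)))]

lemma Phi_mul {F G : MvPowerSeries (Fin 2) ℚ} (hF : Supp F) (hG : Supp G) :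
    Phi (F * G) = Phi F * Phi G := by
  classical
  ext k
  rw [PowerSeries.coeff_mul, coeff_Phi]
  simp only [MvPowerSeries.coeff_mul, coeff_Phi]
  rw [Finset.sum_sigma']
  simp only [Finset.sum_mul_sum]
  have rhs_eq : ∀ p : ℕ × ℕ,
      (∑ j1 ∈ Finset.range (p.1 + 1), ∑ j2 ∈ Finset.range (p.2 + 1),
        MvPowerSeries.coeff (D p.1 j1) F * MvPowerSeries.coeff (D p.2 j2) G)
      = ∑ y ∈ Finset.range (p.1 + 1) ×ˢ Finset.range (p.2 + 1),
          MvPowerSeries.coeff (D p.1 y.1) F * MvPowerSeries.coeff (D p.2 y.2) G := by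
    intro p
    rw [Finset.sum_product]
  simp only [rhs_eq]
  rw [Finset.sum_sigma']
  refine Finset.sum_bij_ne_zero
    (fun x _ _ => ⟨(x.2.1 0, x.2.2 0), (x.2.1 1, x.2.2 1)⟩) ?_ ?_ ?_ ?_
  · rintro ⟨j, u, v⟩ h₁ h₂
    dsimp only at h₂ ⊢
    rw [Finset.mem_sigma] at h₁
    obtain ⟨hj, huv⟩ := h₁
    rw [Finset.HasAntidiagonal.mem_antidiagonal] at huv
    have hu := hF _ (left_ne_zero_of_mul h₂)
    have hv := hG _ (right_ne_zero_of_mul h₂)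
    have e0 : u 0 + v 0 = k := by
      have := congrArg (fun f => f 0) huv; simpa using this
    rw [Finset.mem_sigma]
    constructor
    · simpa [Finset.HasAntidiagonal.mem_antidiagonal] using e0
    · rw [Finset.mem_product, Finset.mem_range, Finset.mem_range]
      exact ⟨by show u 1 < u 0 + 1; omega, by show v 1 < v 0 + 1; omega⟩
  · intro a₁ h₁₁ h₁₂ a₂ h₂₁ h₂₂ heq
    obtain ⟨j₁, u₁, v₁⟩ := a₁
    obtain ⟨j₂, u₂, v₂⟩ := a₂
    have e1 : u₁ 0 = u₂ 0 := congrArg (fun y => y.1.1) heq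
    have e2 : v₁ 0 = v₂ 0 := congrArg (fun y => y.1.2) heq
    have e3 : u₁ 1 = u₂ 1 := congrArg (fun y => y.2.1) heq
    have e4 : v₁ 1 = v₂ 1 := congrArg (fun y => y.2.2) heq
    have hu : u₁ = u₂ := by rw [eq_D u₁, eq_D u₂, e1, e3]
    have hv : v₁ = v₂ := by rw [eq_D v₁, eq_D v₂, e2, e4]
    rw [Finset.mem_sigma] at h₁₁ h₂₁
    have m₁ := Finset.HasAntidiagonal.mem_antidiagonal.mp h₁₁.2
    have m₂ := Finset.HasAntidiagonal.mem_antidiagonal.mp h₂₁.2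
    have hj₁ : u₁ 1 + v₁ 1 = j₁ := by
      have := congrArg (fun f => f 1) m₁; simpa using this
    have hj₂ : u₂ 1 + v₂ 1 = j₂ := by
      have := congrArg (fun f => f 1) m₂; simpa using this
    have hj : j₁ = j₂ := by rw [← hj₁, ← hj₂, e3, e4]
    subst hj
    rw [hu, hv]
  · rintro ⟨⟨k₁, k₂⟩, j₁, j₂⟩ hb hgb
    rw [Finset.mem_sigma] at hb
    have hk : k₁ + k₂ = k := Finset.HasAntidiagonal.mem_antidiagonal.mp hb.1
    have hj : j₁ < k₁ + 1 ∧ j₂ < k₂ + 1 := by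
      have := hb.2
      rw [Finset.mem_product, Finset.mem_range, Finset.mem_range] at this
      exact this
    refine ⟨⟨j₁ + j₂, (D k₁ j₁, D k₂ j₂)⟩, ?_, ?_, ?_⟩
    · rw [Finset.mem_sigma]
      constructor
      · dsimp only; rw [Finset.mem_range]; omega
      · rw [Finset.HasAntidiagonal.mem_antidiagonal, D_add, hk]
    · simpa using hgb
    · simp
  · rintro ⟨j, u, v⟩ h₁ h₂
    have hu : u = D (u 0) (u 1) := eq_D u
    have hv : v = D (v 0) (v 1) := eq_D v
    simp only
    rw [← hu, ← hv]

lemma Phi_pow {F : MvPowerSeries (Fin 2) ℚ} (hF : Supp F) (b : ℕ) :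
    Phi (F ^ b) = (Phi F) ^ b := by
  induction b with
  | zero => simpa using Phi_one
  | succ b ih => rw [pow_succ, pow_succ, Phi_mul (supp_pow hF b) hF, ih]

lemma Phi_prod (s : Finset ℕ) (f : ℕ → MvPowerSeries (Fin 2) ℚ)
    (hf : ∀ m ∈ s, Supp (f m)) :
    Phi (∏ m ∈ s, f m) = ∏ m ∈ s, Phi (f m) := by
  classical
  induction s using Finset.cons_induction with
  | empty => simpa using Phi_one
  | cons m s hm ih =>
    rw [Finset.prod_cons, Finset.prod_cons,
      Phi_mul (hf m (Finset.mem_cons_self m s))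
        (supp_prod s f fun x hx => hf x (Finset.mem_cons_of_mem hx)),
      ih fun x hx => hf x (Finset.mem_cons_of_mem hx)]

lemma D_eq_D_iff (k j a c : ℕ) : D k j = D a c ↔ k = a ∧ j = c := by
  constructor
  · intro h
    have h0 := congrArg (fun f => f 0) h
    have h1 := congrArg (fun f => f 1) h
    simp at h0 h1
    exact ⟨h0, h1⟩
  · rintro ⟨rfl, rfl⟩; rfl

lemma Phi_sub (F G : MvPowerSeries (Fin 2) ℚ) : Phi (F - G) = Phi F - Phi G := by
  ext k
  simp [coeff_Phi, Finset.sum_sub_distrib]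

lemma Phi_one_sub_M (a c : ℕ) (hca : c ≤ a) :
    Phi (1 - M a c) = 1 - PowerSeries.X ^ a := by
  rw [Phi_sub, Phi_one]
  congr 1
  ext k
  rw [coeff_Phi, PowerSeries.coeff_X_pow]
  simp only [M_eq, MvPowerSeries.coeff_monomial, D_eq_D_iff]
  rcases eq_or_ne k a with rfl | hk
  · rw [if_pos rfl]
    have hif : ∀ j, (if k = k ∧ j = c then (1:ℚ) else 0) = if j = c then 1 else 0 := by
      intro j; by_cases h : j = c <;> simp [h]
    rw [Finset.sum_congr rfl fun j _ => hif j,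
      Finset.sum_ite_eq' (Finset.range (k + 1)) c fun _ => (1:ℚ),
      if_pos (Finset.mem_range.mpr (by omega))]
  · rw [if_neg hk]
    apply Finset.sum_eq_zero
    intro j hj
    rw [if_neg]
    tauto

lemma Phi_Fm (a c : ℕ) (hca : c ≤ a) (hc : 1 ≤ c) :
    Phi (Fm a c) = (1 - (PowerSeries.X : PowerSeries ℚ) ^ a)⁻¹ := by
  have ha : 1 ≤ a := le_trans hc hca
  have hconst : PowerSeries.constantCoeff (1 - (PowerSeries.X : PowerSeries ℚ) ^ a) ≠ 0 := by
    rw [← PowerSeries.coeff_zero_eq_constantCoeff_apply, map_sub,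
      PowerSeries.coeff_zero_one, PowerSeries.coeff_X_pow, if_neg (by omega)]
    norm_num
  rw [PowerSeries.eq_inv_iff_mul_eq_one hconst]
  rw [← Phi_one_sub_M a c hca, ← Phi_mul (supp_Fm a c hca hc) (supp_one_sub_M a c hca),
    mul_comm, Fm_inv_mul a c hc, Phi_one]

/-! ### One-variable side -/

/-- `(1 - X^a)⁻¹` in `ℚ[[X]]`. -/
def g1 (a : ℕ) : PowerSeries ℚ := (1 - PowerSeries.X ^ a)⁻¹

lemma one_sub_Xpow_mul_g1 (a : ℕ) (ha : 1 ≤ a) :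
    (1 - (PowerSeries.X : PowerSeries ℚ) ^ a) * g1 a = 1 := by
  apply PowerSeries.mul_inv_cancel
  rw [← PowerSeries.coeff_zero_eq_constantCoeff_apply, map_sub,
    PowerSeries.coeff_zero_one, PowerSeries.coeff_X_pow, if_neg (by omega)]
  norm_num

lemma g1_sub_one (a : ℕ) (ha : 1 ≤ a) :
    g1 a - 1 = PowerSeries.X ^ a * g1 a := by
  have h := one_sub_Xpow_mul_g1 a ha
  rw [sub_mul, one_mul, sub_eq_iff_eq_add] at h
  conv_lhs => rw [h]
  ring

lemma g1_cong (a e : ℕ) (ha : 1 ≤ a) (hae : e ≤ a) :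
    (PowerSeries.X : PowerSeries ℚ) ^ e ∣ g1 a - 1 := by
  rw [g1_sub_one a ha]
  exact Dvd.dvd.mul_right (pow_dvd_pow _ hae) _

lemma dvd_sub_mul {x A A' B B' : PowerSeries ℚ}
    (h1 : x ∣ A - A') (h2 : x ∣ B - B') : x ∣ A * B - A' * B' := by
  have h : A * B - A' * B' = A * (B - B') + (A - A') * B' := by ring
  rw [h]
  exact dvd_add (Dvd.dvd.mul_left h2 A) (Dvd.dvd.mul_right h1 B')

lemma dvd_sub_pow {x A : PowerSeries ℚ} (h : x ∣ A - 1) (b : ℕ) :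
    x ∣ A ^ b - 1 := by
  induction b with
  | zero => simp
  | succ b ih =>
    have := dvd_sub_mul ih h
    simpa [pow_succ] using this

lemma dvd_sub_prod {x : PowerSeries ℚ} (s : Finset ℕ) (f f' : ℕ → PowerSeries ℚ)
    (h : ∀ m ∈ s, x ∣ f m - f' m) : x ∣ ∏ m ∈ s, f m - ∏ m ∈ s, f' m := by
  classical
  induction s using Finset.cons_induction with
  | empty => simp
  | cons m s hm ih =>
    rw [Finset.prod_cons, Finset.prod_cons]
    exact dvd_sub_mul (h m (Finset.mem_cons_self m s))
      (ih fun x hx => h x (Finset.mem_cons_of_mem hx))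

lemma coeff_eq_of_dvd {A B : PowerSeries ℚ} {k : ℕ}
    (h : (PowerSeries.X : PowerSeries ℚ) ^ (k + 1) ∣ A - B) :
    PowerSeries.coeff k A = PowerSeries.coeff k B := by
  obtain ⟨u, hu⟩ := h
  have hA : A = B + PowerSeries.X ^ (k + 1) * u := by
    rw [← hu]; ring
  rw [hA, map_add, PowerSeries.coeff_X_pow_mul', if_neg (by omega), add_zero]

lemma prod_trunc (L k : ℕ) (h : ℕ → PowerSeries ℚ) (hk : k ≤ L)
    (hcong : ∀ m, k < m → (PowerSeries.X : PowerSeries ℚ) ^ (k + 1) ∣ h m - 1) :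
    (PowerSeries.X : PowerSeries ℚ) ^ (k + 1) ∣
      (∏ m ∈ Finset.Icc 1 L, h m) - ∏ m ∈ Finset.Icc 1 k, h m := by
  have heq : ∏ m ∈ Finset.Icc 1 k, h m
      = ∏ m ∈ Finset.Icc 1 L, (if m ≤ k then h m else 1) := by
    rw [← Finset.prod_subset (Finset.Icc_subset_Icc le_rfl hk)
      (fun x _ hx => by
        rw [if_neg]
        intro hxk
        exact hx (Finset.mem_Icc.mpr ⟨by
          rcases Finset.mem_Icc.mp ‹x ∈ Finset.Icc 1 L› with ⟨h1, _⟩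
          exact h1, hxk⟩))]
    apply Finset.prod_congr rfl
    intro m hm
    rw [if_pos (Finset.mem_Icc.mp hm).2]
  rw [heq]
  apply dvd_sub_prod
  intro m hm
  by_cases hmk : m ≤ k
  · rw [if_pos hmk]; simp
  · rw [if_neg hmk]
    exact hcong m (by omega)

/-- The `m`-th factor of Göttsche's product. -/
def gf (b m : ℕ) : MvPowerSeries (Fin 2) ℚ :=
  Fm (2 * m - 2) m * (Fm (2 * m) m) ^ b * Fm (2 * m + 2) m

lemma supp_gf (b m : ℕ) (hm : 2 ≤ m) : Supp (gf b m) :=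
  supp_mul (supp_mul (supp_Fm _ _ (by omega) (by omega))
    (supp_pow (supp_Fm _ _ (by omega) (by omega)) b))
    (supp_Fm _ _ (by omega) (by omega))

lemma Phi_gf (b m : ℕ) (hm : 2 ≤ m) :
    Phi (gf b m) = g1 (2 * m - 2) * g1 (2 * m) ^ b * g1 (2 * m + 2) := by
  rw [gf, Phi_mul (supp_mul (supp_Fm _ _ (by omega) (by omega))
      (supp_pow (supp_Fm _ _ (by omega) (by omega)) b))
      (supp_Fm _ _ (by omega) (by omega)),
    Phi_mul (supp_Fm _ _ (by omega) (by omega))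
      (supp_pow (supp_Fm _ _ (by omega) (by omega)) b),
    Phi_pow (supp_Fm _ _ (by omega) (by omega)) b,
    Phi_Fm _ _ (by omega) (by omega), Phi_Fm _ _ (by omega) (by omega),
    Phi_Fm _ _ (by omega) (by omega)]
  rfl

lemma D_sub_q (k n : ℕ) : D k (n + 1) - D 0 1 = D k n := by
  ext i
  fin_cases i
  · simp [Finsupp.tsub_apply]
  · simp [Finsupp.tsub_apply]

lemma coeff_geom (H : MvPowerSeries (Fin 2) ℚ) (k : ℕ) : ∀ n : ℕ,
    MvPowerSeries.coeff (D k n) (Fm 0 1 * H)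
      = ∑ j ∈ Finset.range (n + 1), MvPowerSeries.coeff (D k j) H := by
  intro n
  induction n with
  | zero =>
    conv_lhs => rw [Fm_rec 0 1 le_rfl]
    rw [add_mul, one_mul, map_add, mul_assoc, M_eq, MvPowerSeries.coeff_monomial_mul,
      if_neg (by
        intro h
        have := Finsupp.le_def.mp h 1
        simp at this)]
    simp
  | succ n ih =>
    conv_lhs => rw [Fm_rec 0 1 le_rfl]
    rw [add_mul, one_mul, map_add, mul_assoc, M_eq, MvPowerSeries.coeff_monomial_mul,
      if_pos (by
        rw [Finsupp.le_def]
        intro i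
        fin_cases i
        · simp
        · simp), one_mul, D_sub_q, ih]
    conv_rhs => rw [Finset.sum_range_succ]
    exact add_comm _ _

end

end Stmt5Aux

open Stmt5Aux

/-- Stabilization: for `0 ≤ k ≤ n`, the coefficient of `t^k q^n` in
Göttsche's series `G(t,q)` equals the coefficient of `t^k` in `P(t)`. -/
theorem stmt5 (b : ℕ) (k n : ℕ) (hkn : k ≤ n) :
    MvPowerSeries.coeff (Finsupp.single 0 k + Finsupp.single 1 n) (Gser b)
      = PowerSeries.coeff k (Pser b) := by
  classical
  have hGser : Gser b = iProd2 (gf b) := rfl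
  have hd : (Finsupp.single 0 k + Finsupp.single 1 n : Fin 2 →₀ ℕ) = D k n := rfl
  have hL : MvPowerSeries.coeff (D k n) (Gser b)
      = MvPowerSeries.coeff (D k n) (∏ m ∈ Finset.Icc 1 (k + n), gf b m) := by
    have h1 : MvPowerSeries.coeff (D k n) (Gser b)
        = MvPowerSeries.coeff (D k n)
          (∏ m ∈ Finset.Icc 1 ((D k n) 0 + (D k n) 1), gf b m) := rfl
    rw [h1, D_apply0, D_apply1]
  have hR : PowerSeries.coeff k (Pser b)
      = PowerSeries.coeff k (∏ m ∈ Finset.Icc 1 k,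
          (g1 (2 * m)) ^ (b + 1) * (if 2 ≤ m then g1 (2 * m) else 1)) :=
    PowerSeries.coeff_mk _ _
  rw [hd, hL, hR]
  rcases Nat.eq_zero_or_pos n with hn | hn
  · have hk0 : k = 0 := by omega
    subst hn hk0
    rw [show Finset.Icc 1 0 = (∅ : Finset ℕ) from rfl, Finset.prod_empty,
      Finset.prod_empty, MvPowerSeries.coeff_one,
      if_pos (by ext i; fin_cases i <;> simp : D 0 0 = 0)]
    simp
  -- main case : 1 ≤ n
  have hicc : Finset.Icc 1 (k + n) = insert 1 (Finset.Icc 2 (k + n)) := by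
    ext m
    simp only [Finset.mem_Icc, Finset.mem_insert]
    omega
  have h1n : (1 : ℕ) ∉ Finset.Icc 2 (k + n) := by simp
  set H : MvPowerSeries (Fin 2) ℚ :=
    (Fm 2 1) ^ b * Fm 4 1 * ∏ m ∈ Finset.Icc 2 (k + n), gf b m with hH
  have hsplit : ∏ m ∈ Finset.Icc 1 (k + n), gf b m = Fm 0 1 * H := by
    rw [hicc, Finset.prod_insert h1n, hH]
    have hgf1 : gf b 1 = Fm 0 1 * (Fm 2 1) ^ b * Fm 4 1 := by
      norm_num [gf]
    rw [hgf1]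
    ring
  have hSuppH : Supp H := by
    rw [hH]
    exact supp_mul (supp_mul (supp_pow (supp_Fm 2 1 (by omega) le_rfl) b)
      (supp_Fm 4 1 (by omega) le_rfl))
      (supp_prod _ _ fun m hm => supp_gf b m (Finset.mem_Icc.mp hm).1)
  rw [hsplit, coeff_geom H k n]
  have hstab : ∑ j ∈ Finset.range (n + 1), MvPowerSeries.coeff (D k j) H
      = ∑ j ∈ Finset.range (k + 1), MvPowerSeries.coeff (D k j) H := by
    symm
    apply Finset.sum_subset (Finset.range_subset_range.mpr (by omega))
    intro j hj hnj
    by_contra hne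
    have := hSuppH (D k j) hne
    rw [D_apply0, D_apply1] at this
    rw [Finset.mem_range] at hj hnj
    omega
  rw [hstab, ← coeff_Phi]
  have hPhiH : Phi H = g1 2 ^ b * g1 4 *
      ∏ m ∈ Finset.Icc 2 (k + n), (g1 (2 * m - 2) * g1 (2 * m) ^ b * g1 (2 * m + 2)) := by
    rw [hH,
      Phi_mul (supp_mul (supp_pow (supp_Fm 2 1 (by omega) le_rfl) b)
        (supp_Fm 4 1 (by omega) le_rfl))
        (supp_prod _ _ fun m hm => supp_gf b m (Finset.mem_Icc.mp hm).1),
      Phi_mul (supp_pow (supp_Fm 2 1 (by omega) le_rfl) b) (supp_Fm 4 1 (by omega) le_rfl),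
      Phi_pow (supp_Fm 2 1 (by omega) le_rfl) b,
      Phi_Fm 2 1 (by omega) le_rfl, Phi_Fm 4 1 (by omega) le_rfl,
      Phi_prod _ _ fun m hm => supp_gf b m (Finset.mem_Icc.mp hm).1]
    congr 1
    exact Finset.prod_congr rfl fun m hm => Phi_gf b m (Finset.mem_Icc.mp hm).1
  rw [hPhiH]
  -- split the product into three products
  rw [show (∏ m ∈ Finset.Icc 2 (k + n), (g1 (2 * m - 2) * g1 (2 * m) ^ b * g1 (2 * m + 2)))
      = (∏ m ∈ Finset.Icc 2 (k + n), g1 (2 * m - 2))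
        * (∏ m ∈ Finset.Icc 2 (k + n), g1 (2 * m) ^ b)
        * (∏ m ∈ Finset.Icc 2 (k + n), g1 (2 * m + 2)) by
    rw [← Finset.prod_mul_distrib, ← Finset.prod_mul_distrib]]
  -- reindex the first product
  have eA : ∏ m ∈ Finset.Icc 2 (k + n), g1 (2 * m - 2)
      = ∏ j ∈ Finset.Icc 1 (k + n - 1), g1 (2 * j) := by
    rw [show Finset.Icc 2 (k + n)
        = (Finset.Icc 1 (k + n - 1)).map (addRightEmbedding 1) by
      rw [Finset.map_add_right_Icc]
      congr 1
      omega]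
    rw [Finset.prod_map]
    apply Finset.prod_congr rfl
    intro j hj
    have h2 : 2 * (j + 1) - 2 = 2 * j := by omega
    rw [addRightEmbedding_apply, h2]
  have eB : g1 2 ^ b * ∏ m ∈ Finset.Icc 2 (k + n), g1 (2 * m) ^ b
      = ∏ m ∈ Finset.Icc 1 (k + n), g1 (2 * m) ^ b := by
    rw [hicc, Finset.prod_insert h1n]
  have eC : g1 4 * ∏ m ∈ Finset.Icc 2 (k + n), g1 (2 * m + 2)
      = ∏ j ∈ Finset.Icc 1 (k + n + 1), (if 2 ≤ j then g1 (2 * j) else 1) := by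
    have e1 : g1 4 * ∏ m ∈ Finset.Icc 2 (k + n), g1 (2 * m + 2)
        = ∏ m ∈ Finset.Icc 1 (k + n), g1 (2 * m + 2) := by
      rw [hicc, Finset.prod_insert h1n]
    have e2 : ∏ m ∈ Finset.Icc 1 (k + n), g1 (2 * m + 2)
        = ∏ j ∈ Finset.Icc 2 (k + n + 1), g1 (2 * j) := by
      rw [show Finset.Icc 2 (k + n + 1)
          = (Finset.Icc 1 (k + n)).map (addRightEmbedding 1) by
        rw [Finset.map_add_right_Icc]]
      rw [Finset.prod_map]
      apply Finset.prod_congr rfl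
      intro j hj
      have h2 : 2 * (j + 1) = 2 * j + 2 := by omega
      rw [addRightEmbedding_apply, h2]
    have e3 : ∏ j ∈ Finset.Icc 2 (k + n + 1), g1 (2 * j)
        = ∏ j ∈ Finset.Icc 1 (k + n + 1), (if 2 ≤ j then g1 (2 * j) else 1) := by
      rw [Finset.prod_congr rfl fun j hj =>
        (if_pos (Finset.mem_Icc.mp hj).1).symm]
      apply Finset.prod_subset (Finset.Icc_subset_Icc (by omega) le_rfl)
      intro x hx hnx
      rw [Finset.mem_Icc] at hx
      rw [if_neg]
      intro h2x
      exact hnx (Finset.mem_Icc.mpr ⟨h2x, hx.2⟩)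
    rw [e1, e2, e3]
  rw [show g1 2 ^ b * g1 4 *
        ((∏ m ∈ Finset.Icc 2 (k + n), g1 (2 * m - 2))
          * (∏ m ∈ Finset.Icc 2 (k + n), g1 (2 * m) ^ b)
          * (∏ m ∈ Finset.Icc 2 (k + n), g1 (2 * m + 2)))
      = (∏ m ∈ Finset.Icc 2 (k + n), g1 (2 * m - 2))
          * (g1 2 ^ b * ∏ m ∈ Finset.Icc 2 (k + n), g1 (2 * m) ^ b)
          * (g1 4 * ∏ m ∈ Finset.Icc 2 (k + n), g1 (2 * m + 2)) by ring,
    eA, eB, eC]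
  have cA : (PowerSeries.X : PowerSeries ℚ) ^ (k + 1) ∣
      (∏ j ∈ Finset.Icc 1 (k + n - 1), g1 (2 * j)) - ∏ j ∈ Finset.Icc 1 k, g1 (2 * j) :=
    prod_trunc (k + n - 1) k (fun j => g1 (2 * j)) (by omega)
      (fun m hm => g1_cong (2 * m) (k + 1) (by omega) (by omega))
  have cB : (PowerSeries.X : PowerSeries ℚ) ^ (k + 1) ∣
      (∏ m ∈ Finset.Icc 1 (k + n), g1 (2 * m) ^ b)
        - ∏ m ∈ Finset.Icc 1 k, g1 (2 * m) ^ b :=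
    prod_trunc (k + n) k (fun m => g1 (2 * m) ^ b) (by omega)
      (fun m hm => dvd_sub_pow (g1_cong (2 * m) (k + 1) (by omega) (by omega)) b)
  have cC : (PowerSeries.X : PowerSeries ℚ) ^ (k + 1) ∣
      (∏ j ∈ Finset.Icc 1 (k + n + 1), (if 2 ≤ j then g1 (2 * j) else 1))
        - ∏ j ∈ Finset.Icc 1 k, (if 2 ≤ j then g1 (2 * j) else 1) :=
    prod_trunc (k + n + 1) k (fun j => if 2 ≤ j then g1 (2 * j) else 1) (by omega)
      (fun m hm => by
        by_cases h2 : 2 ≤ m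
        · rw [if_pos h2]
          exact g1_cong (2 * m) (k + 1) (by omega) (by omega)
        · rw [if_neg h2]
          simp)
  rw [coeff_eq_of_dvd (dvd_sub_mul (dvd_sub_mul cA cB) cC)]
  congr 1
  rw [← Finset.prod_mul_distrib, ← Finset.prod_mul_distrib]
  apply Finset.prod_congr rfl
  intro m hm
  rw [pow_succ]
  ring
end

section
/- With $b = 22$, for every even integer $n \ge 4$ the difference between the coefficient of $t^n q^n$ and the coefficient of $t^n q^{n-2}$ in Göttsche's series $\prod_{m=1}^{\infty} (1-t^{2m-2}q^m)^{-1}(1-t^{2m}q^m)^{-22}(1-t^{2m+2}q^m)^{-1}$ equals $24$. -/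
open Finset

noncomputable section

abbrev Ser := MvPowerSeries (Fin 2) ℚ
def E (a b : ℕ) : Fin 2 →₀ ℕ := Finsupp.single 0 a + Finsupp.single 1 b
@[simp] lemma E_apply0 (a b : ℕ) : E a b 0 = a := by simp [E, Finsupp.single_apply]
@[simp] lemma E_apply1 (a b : ℕ) : E a b 1 = b := by simp [E, Finsupp.single_apply]
lemma E_eta (d : Fin 2 →₀ ℕ) : E (d 0) (d 1) = d := by ext i; fin_cases i <;> simp
lemma E_add (a b c d : ℕ) : E a b + E c d = E (a + c) (b + d) := by
  ext i; fin_cases i <;> simp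
lemma E_inj {a b c d : ℕ} : E a b = E c d ↔ a = c ∧ b = d := by
  constructor
  · intro h
    exact ⟨by have := congrArg (fun f => f 0) h; simpa using this,
      by have := congrArg (fun f => f 1) h; simpa using this⟩
  · rintro ⟨rfl, rfl⟩; rfl
lemma E_eq_zero {a b : ℕ} : E a b = 0 ↔ a = 0 ∧ b = 0 := by
  constructor
  · intro h
    exact ⟨by have := congrArg (fun f => f 0) h; simpa using this,
      by have := congrArg (fun f => f 1) h; simpa using this⟩
  · rintro ⟨rfl, rfl⟩; ext i; fin_cases i <;> simp
lemma E_le {a b c d : ℕ} : E a b ≤ E c d ↔ a ≤ c ∧ b ≤ d := by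
  rw [Finsupp.le_def]
  constructor
  · intro h; exact ⟨by simpa using h 0, by simpa using h 1⟩
  · intro h i; fin_cases i <;> simp [h.1, h.2]
lemma E_sub (a b c d : ℕ) : E a b - E c d = E (a - c) (b - d) := by
  ext i; fin_cases i <;> simp [Finsupp.tsub_apply]
def co (φ : Ser) (i j : ℕ) : ℚ := MvPowerSeries.coeff (E i j) φ

lemma co_mul (φ ψ : Ser) (α β : ℕ) :
    co (φ * ψ) α β = ∑ i ∈ range (α+1), ∑ j ∈ range (β+1),
      co φ i j * co ψ (α - i) (β - j) := by
  rw [co, MvPowerSeries.coeff_mul]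
  rw [← Finset.sum_product']
  refine Finset.sum_nbij' (fun p => (p.1 0, p.1 1))
    (fun p => (E p.1 p.2, E (α - p.1) (β - p.2))) ?_ ?_ ?_ ?_ ?_
  · intro p hp
    rw [Finset.HasAntidiagonal.mem_antidiagonal] at hp
    have h0 : p.1 0 + p.2 0 = α := by
      have := congrArg (fun f => f 0) hp; simpa using this
    have h1 : p.1 1 + p.2 1 = β := by
      have := congrArg (fun f => f 1) hp; simpa using this
    simp only [Finset.mem_product, Finset.mem_range]
    omega
  · intro p hp
    simp only [Finset.mem_product, Finset.mem_range] at hp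
    rw [Finset.HasAntidiagonal.mem_antidiagonal, E_add]
    congr 1 <;> omega
  · intro p hp
    rw [Finset.HasAntidiagonal.mem_antidiagonal] at hp
    have h0 : p.1 0 + p.2 0 = α := by
      have := congrArg (fun f => f 0) hp; simpa using this
    have h1 : p.1 1 + p.2 1 = β := by
      have := congrArg (fun f => f 1) hp; simpa using this
    have e1 : E (p.1 0) (p.1 1) = p.1 := E_eta _
    have e2 : E (α - p.1 0) (β - p.1 1) = p.2 := by
      rw [show α - p.1 0 = p.2 0 by omega, show β - p.1 1 = p.2 1 by omega]
      exact E_eta _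
    simp [e1, e2]
  · intro p hp; simp
  · intro p hp
    rw [Finset.HasAntidiagonal.mem_antidiagonal] at hp
    have h0 : p.1 0 + p.2 0 = α := by
      have := congrArg (fun f => f 0) hp; simpa using this
    have h1 : p.1 1 + p.2 1 = β := by
      have := congrArg (fun f => f 1) hp; simpa using this
    have e1 : E (p.1 0) (p.1 1) = p.1 := E_eta _
    have e2 : E (α - p.1 0) (β - p.1 1) = p.2 := by
      rw [show α - p.1 0 = p.2 0 by omega, show β - p.1 1 = p.2 1 by omega]
      exact E_eta _
    simp only [co, e1, e2]


lemma co_one (i j : ℕ) : co (1 : Ser) i j = if i = 0 ∧ j = 0 then 1 else 0 := by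
  classical
  rw [co, MvPowerSeries.coeff_one]
  simp [E_eq_zero]

lemma co_sub (φ ψ : Ser) (i j : ℕ) : co (φ - ψ) i j = co φ i j - co ψ i j := by
  simp [co]

open Classical in
/-- The geometric series `(1 - t^a q^b)⁻¹ = ∑_k t^{ka} q^{kb}`. -/
def geom (a b : ℕ) : Ser := fun e => if ∃ k, e = E (k*a) (k*b) then 1 else 0

open Classical in
lemma co_geom (a b i j : ℕ) :
    co (geom a b) i j = if ∃ k, i = k*a ∧ j = k*b then 1 else 0 := by
  rw [co, MvPowerSeries.coeff_apply, geom]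
  by_cases h : ∃ k, i = k*a ∧ j = k*b
  · obtain ⟨k, h1, h2⟩ := h
    rw [if_pos ⟨k, by rw [h1, h2]⟩, if_pos ⟨k, h1, h2⟩]
  · rw [if_neg, if_neg h]
    rintro ⟨k, hk⟩
    exact h ⟨k, E_inj.mp hk⟩

lemma monomial_eq (a b : ℕ) : tV ^ a * qV ^ b = MvPowerSeries.monomial (E a b) 1 := by
  rw [tV, qV, MvPowerSeries.X_pow_eq, MvPowerSeries.X_pow_eq,
    MvPowerSeries.monomial_mul_monomial, one_mul, E]

lemma geom_key (a b : ℕ) (hb : 0 < a + b) (i j : ℕ) :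
    co (geom a b * (1 - MvPowerSeries.monomial (E a b) 1)) i j
      = co (1 : Ser) i j := by
  classical
  have expand : geom a b * (1 - MvPowerSeries.monomial (E a b) 1)
      = geom a b - geom a b * MvPowerSeries.monomial (E a b) 1 := by ring
  rw [expand, co_sub, co_one]
  have hmon : co (geom a b * MvPowerSeries.monomial (E a b) 1) i j
      = if a ≤ i ∧ b ≤ j then co (geom a b) (i - a) (j - b) else 0 := by
    rw [co, MvPowerSeries.coeff_mul_monomial]
    by_cases h : a ≤ i ∧ b ≤ j
    · rw [if_pos (E_le.mpr h), if_pos h, mul_one, E_sub, co]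
    · rw [if_neg (fun hc => h (E_le.mp hc)), if_neg h]
  rw [hmon]
  by_cases h0 : i = 0 ∧ j = 0
  · have hle : ¬ (a ≤ i ∧ b ≤ j) := by omega
    rw [if_pos h0, if_neg hle, co_geom, if_pos ⟨0, by omega, by omega⟩]
    norm_num
  · rw [if_neg h0]
    by_cases hk : ∃ k, i = k * a ∧ j = k * b
    · obtain ⟨k, h1, h2⟩ := hk
      have hkpos : k ≠ 0 := by
        rintro rfl
        exact h0 ⟨by omega, by omega⟩
      obtain ⟨k', rfl⟩ := Nat.exists_eq_succ_of_ne_zero hkpos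
      have hle : a ≤ i ∧ b ≤ j := by
        constructor <;> nlinarith
      rw [if_pos hle, co_geom, co_geom,
        if_pos ⟨k' + 1, h1, h2⟩, if_pos ⟨k', by rw [h1, Nat.succ_mul]; omega,
          by rw [h2, Nat.succ_mul]; omega⟩]
      ring
    · rw [co_geom, if_neg hk]
      by_cases hle : a ≤ i ∧ b ≤ j
      · rw [if_pos hle, co_geom, if_neg]
        · ring
        · rintro ⟨k', h1, h2⟩
          exact hk ⟨k' + 1, by rw [Nat.succ_mul]; omega, by rw [Nat.succ_mul]; omega⟩
      · rw [if_neg hle]; ring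

lemma geom_spec (a b : ℕ) (hb : 0 < a + b) :
    (1 - tV ^ a * qV ^ b)⁻¹ = geom a b := by
  classical
  have hE : ¬ (E a b = 0) := by rw [E_eq_zero]; omega
  have hc : MvPowerSeries.constantCoeff (1 - tV ^ a * qV ^ b) ≠ 0 := by
    rw [monomial_eq, map_sub, map_one, ← MvPowerSeries.coeff_zero_eq_constantCoeff_apply,
      MvPowerSeries.coeff_monomial, if_neg (by exact fun h => hE h.symm)]
    norm_num
  rw [MvPowerSeries.inv_eq_iff_mul_eq_one hc, monomial_eq]
  ext d
  rw [← E_eta d]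
  exact geom_key a b hb (d 0) (d 1)

/-- support lies on or below the diagonal `q`-degree ≤ `t`-degree. -/
def Good (φ : Ser) : Prop := ∀ i j, co φ i j ≠ 0 → j ≤ i

lemma good_mul {φ ψ : Ser} (hφ : Good φ) (hψ : Good ψ) : Good (φ * ψ) := by
  intro α β h
  rw [co_mul] at h
  obtain ⟨i, hi, h⟩ := Finset.exists_ne_zero_of_sum_ne_zero h
  obtain ⟨j, hj, h⟩ := Finset.exists_ne_zero_of_sum_ne_zero h
  rw [Finset.mem_range] at hi hj
  have h1 := hφ i j (left_ne_zero_of_mul h)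
  have h2 := hψ (α - i) (β - j) (right_ne_zero_of_mul h)
  omega

lemma co_mul_diag {φ ψ : Ser} (hφ : Good φ) (hψ : Good ψ) (k : ℕ) :
    co (φ * ψ) k k = ∑ j ∈ range (k+1), co φ j j * co ψ (k-j) (k-j) := by
  rw [co_mul]
  refine Finset.sum_congr rfl fun i hi => ?_
  rw [Finset.mem_range] at hi
  refine Finset.sum_eq_single i (fun j hj hne => ?_) (fun h => absurd (Finset.mem_range.mpr ?_) h)
  · rw [Finset.mem_range] at hj
    by_contra h
    have h1 := hφ i j (left_ne_zero_of_mul h)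
    have h2 := hψ (k - i) (k - j) (right_ne_zero_of_mul h)
    omega
  · omega

lemma co_mul_slice {φ ψ : Ser} (hφ : Good φ) (hψ : Good ψ) (k : ℕ) :
    co (φ * ψ) (k+1) k = ∑ j ∈ range (k+1),
      (co φ j j * co ψ (k-j+1) (k-j) + co φ (j+1) j * co ψ (k-j) (k-j)) := by
  rw [co_mul, Finset.sum_comm]
  refine Finset.sum_congr rfl fun j hj => ?_
  rw [Finset.mem_range] at hj
  have hsub : ({j, j+1} : Finset ℕ) ⊆ range (k+1+1) := by
    intro x hx
    simp only [Finset.mem_insert, Finset.mem_singleton] at hx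
    rw [Finset.mem_range]
    omega
  rw [← Finset.sum_subset hsub (fun i hi hni => ?_)]
  · rw [Finset.sum_pair (by omega : j ≠ j + 1),
      show k+1-j = k-j+1 by omega, show k+1-(j+1) = k-j by omega]
  · simp only [Finset.mem_insert, Finset.mem_singleton] at hni
    rw [Finset.mem_range] at hi
    by_contra h
    have h1 := hφ i j (left_ne_zero_of_mul h)
    have h2 := hψ (k + 1 - i) (k - j) (right_ne_zero_of_mul h)
    omega

lemma geom_good {a b : ℕ} (h : b ≤ a) : Good (geom a b) := by
  intro i j hne
  rw [co_geom] at hne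
  by_cases hk : ∃ k, i = k*a ∧ j = k*b
  · obtain ⟨k, rfl, rfl⟩ := hk
    exact Nat.mul_le_mul_left k h
  · rw [if_neg hk] at hne; exact absurd rfl hne

lemma geom_diag_triv {a b : ℕ} (h : b < a) (k : ℕ) :
    co (geom a b) k k = if k = 0 then 1 else 0 := by
  rw [co_geom]
  by_cases hk : k = 0
  · subst hk; rw [if_pos ⟨0, by omega, by omega⟩, if_pos rfl]
  · rw [if_neg hk, if_neg]
    rintro ⟨k', h1, h2⟩
    rcases Nat.eq_zero_or_pos k' with rfl | hp
    · omega
    · nlinarith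
lemma geom_diag {b : ℕ} (k : ℕ) :
    co (geom b b) k k = if b ∣ k then 1 else 0 := by
  rw [co_geom]
  by_cases hk : b ∣ k
  · obtain ⟨c, rfl⟩ := hk
    rw [if_pos ⟨c, by ring, by ring⟩, if_pos ⟨c, rfl⟩]
  · rw [if_neg, if_neg hk]
    rintro ⟨k', rfl, -⟩
    exact hk ⟨k', mul_comm k' b⟩

lemma geom_slice {a b : ℕ} (h : b ≤ a) (k : ℕ) :
    co (geom a b) (k+1) k = if a = b+1 ∧ k = b then 1 else 0 := by
  rw [co_geom]
  by_cases hc : a = b+1 ∧ k = b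
  · obtain ⟨rfl, rfl⟩ := hc
    rw [if_pos ⟨1, by omega, by omega⟩, if_pos ⟨rfl, rfl⟩]
  · rw [if_neg, if_neg hc]
    rintro ⟨k', h1, h2⟩
    apply hc
    have hka : k' * b ≤ k' * a := Nat.mul_le_mul_left k' h
    rcases Nat.eq_zero_or_pos k' with rfl | hp
    · omega
    · have hmul : k' * (a - b) = 1 := by
        rw [Nat.mul_sub]; omega
      have h1' : k' = 1 := Nat.eq_one_of_dvd_one ⟨a - b, hmul.symm⟩
      subst h1'
      simp only [one_mul] at h1 h2
      constructor <;> omega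

/-- A factor that is `1 + higher order` with no diagonal or slice-1 terms. -/
def Triv (φ : Ser) : Prop :=
  Good φ ∧ (∀ k, co φ k k = if k = 0 then 1 else 0) ∧ (∀ k, co φ (k+1) k = 0)

lemma triv_one : Triv (1 : Ser) := by
  refine ⟨fun i j h => ?_, fun k => ?_, fun k => ?_⟩
  · rw [co_one] at h
    by_cases hc : i = 0 ∧ j = 0
    · omega
    · rw [if_neg hc] at h; exact absurd rfl h
  · rw [co_one]
    by_cases hk : k = 0
    · subst hk; simp
    · rw [if_neg (by omega), if_neg hk]
  · rw [co_one, if_neg (by omega)]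

lemma triv_geom {a b : ℕ} (h : b < a) (h2 : a ≠ b + 1) : Triv (geom a b) := by
  refine ⟨geom_good (by omega), fun k => geom_diag_triv h k, fun k => ?_⟩
  rw [geom_slice (by omega), if_neg (by tauto)]

lemma triv_mul {φ ψ : Ser} (hφ : Triv φ) (hψ : Triv ψ) : Triv (φ * ψ) := by
  obtain ⟨hg1, hd1, hs1⟩ := hφ
  obtain ⟨hg2, hd2, hs2⟩ := hψ
  refine ⟨good_mul hg1 hg2, fun k => ?_, fun k => ?_⟩
  · rw [co_mul_diag hg1 hg2]
    rw [Finset.sum_eq_single 0]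
    · rw [hd1, hd2, if_pos rfl, one_mul, Nat.sub_zero]
    · intro j hj hne
      rw [hd1, if_neg hne, zero_mul]
    · intro h; exact absurd (Finset.mem_range.mpr (by omega)) h
  · rw [co_mul_slice hg1 hg2]
    apply Finset.sum_eq_zero
    intro j hj
    rw [hs1, hs2, zero_mul, mul_zero, add_zero]

lemma triv_pow {φ : Ser} (hφ : Triv φ) (r : ℕ) : Triv (φ ^ r) := by
  induction r with
  | zero => simpa using triv_one
  | succ n ih => rw [pow_succ]; exact triv_mul ih hφ

lemma mul_triv_diag {φ ψ : Ser} (hφ : Good φ) (hψ : Triv ψ) (k : ℕ) :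
    co (φ * ψ) k k = co φ k k := by
  obtain ⟨hg2, hd2, hs2⟩ := hψ
  rw [co_mul_diag hφ hg2]
  rw [Finset.sum_eq_single k]
  · rw [Nat.sub_self, hd2, if_pos rfl, mul_one]
  · intro j hj hne
    rw [Finset.mem_range] at hj
    rw [hd2, if_neg (by omega), mul_zero]
  · intro h; exact absurd (Finset.mem_range.mpr (by omega)) h

lemma mul_triv_slice {φ ψ : Ser} (hφ : Good φ) (hψ : Triv ψ) (k : ℕ) :
    co (φ * ψ) (k+1) k = co φ (k+1) k := by
  obtain ⟨hg2, hd2, hs2⟩ := hψ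
  rw [co_mul_slice hφ hg2]
  rw [Finset.sum_eq_single k]
  · rw [Nat.sub_self, hs2, hd2, if_pos rfl, mul_one, mul_zero, zero_add]
  · intro j hj hne
    rw [Finset.mem_range] at hj
    rw [hd2, if_neg (by omega), hs2, mul_zero, mul_zero, add_zero]
  · intro h; exact absurd (Finset.mem_range.mpr (by omega)) h


/-! ### The factors of Göttsche's series -/

/-- The `m`-th factor of Göttsche's series for `b = 22`, as a product of geometric series. -/
def FF (m : ℕ) : Ser :=
  geom (2*m-2) m * (geom (2*m) m)^22 * geom (2*m+2) m

lemma FF_eq (m : ℕ) (hm : 1 ≤ m) :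
    (1 - tV ^ (2*m-2) * qV ^ m)⁻¹ * ((1 - tV ^ (2*m) * qV ^ m)⁻¹)^22 *
      (1 - tV ^ (2*m+2) * qV ^ m)⁻¹ = FF m := by
  rw [geom_spec _ _ (by omega), geom_spec _ _ (by omega), geom_spec _ _ (by omega), FF]

lemma triv_FF {m : ℕ} (hm : 4 ≤ m) : Triv (FF m) := by
  refine triv_mul (triv_mul (triv_geom (by omega) (by omega))
    (triv_pow (triv_geom (by omega) (by omega)) 22)) (triv_geom (by omega) (by omega))

lemma good_FF {m : ℕ} (hm : 2 ≤ m) : Good (FF m) :=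
  good_mul (good_mul (geom_good (by omega)) ((triv_pow (triv_geom (by omega) (by omega)) 22).1))
    (geom_good (by omega))

/-- diagonal-trivial product: slices add. -/
lemma diagtriv_mul {φ ψ : Ser} (hφ : Good φ) (hψ : Good ψ)
    (dφ : ∀ k, co φ k k = if k = 0 then 1 else 0)
    (dψ : ∀ k, co ψ k k = if k = 0 then 1 else 0) :
    (∀ k, co (φ * ψ) k k = if k = 0 then 1 else 0) ∧
    (∀ k, co (φ * ψ) (k+1) k = co φ (k+1) k + co ψ (k+1) k) := by
  constructor
  · intro k
    rw [co_mul_diag hφ hψ, Finset.sum_eq_single 0]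
    · rw [dφ, dψ, if_pos rfl, one_mul, Nat.sub_zero]
    · intro j hj hne
      rw [dφ, if_neg hne, zero_mul]
    · intro h; exact absurd (Finset.mem_range.mpr (by omega)) h
  · intro k
    rw [co_mul_slice hφ hψ, Finset.sum_add_distrib]
    have h1 : ∑ j ∈ range (k+1), co φ j j * co ψ (k-j+1) (k-j) = co ψ (k+1) k := by
      rw [Finset.sum_eq_single 0]
      · rw [dφ, if_pos rfl, one_mul, Nat.sub_zero]
      · intro j hj hne
        rw [dφ, if_neg hne, zero_mul]
      · intro h; exact absurd (Finset.mem_range.mpr (by omega)) h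
    have h2 : ∑ j ∈ range (k+1), co φ (j+1) j * co ψ (k-j) (k-j) = co φ (k+1) k := by
      rw [Finset.sum_eq_single k]
      · rw [Nat.sub_self, dψ, if_pos rfl, mul_one]
      · intro j hj hne
        rw [Finset.mem_range] at hj
        rw [dψ, if_neg (by omega), mul_zero]
      · intro h; exact absurd (Finset.mem_range.mpr (by omega)) h
    rw [h1, h2, add_comm]

/-- slices of powers of `geom 2 1`. -/
lemma pow21 (r : ℕ) : Good ((geom 2 1)^r) ∧
    (∀ k, co ((geom 2 1)^r) k k = if k = 0 then 1 else 0) ∧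
    (∀ k, co ((geom 2 1)^r) (k+1) k = if k = 1 then (r : ℚ) else 0) := by
  induction r with
  | zero =>
    refine ⟨by simpa using triv_one.1, by simpa using triv_one.2.1, fun k => ?_⟩
    have := triv_one.2.2 k
    simp only [pow_zero, this, Nat.cast_zero]
    rw [eq_comm, ite_eq_right_iff]
    intro; rfl
  | succ n ih =>
    obtain ⟨hg, hd, hs⟩ := ih
    have hg1 : Good (geom 2 1) := geom_good (by omega)
    have hd1 : ∀ k, co (geom 2 1) k k = if k = 0 then 1 else 0 :=
      fun k => geom_diag_triv (by omega) k
    have key := diagtriv_mul hg hg1 hd hd1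
    refine ⟨by rw [pow_succ]; exact good_mul hg hg1, by rw [pow_succ]; exact key.1, fun k => ?_⟩
    rw [pow_succ, key.2, hs, geom_slice (by omega)]
    by_cases hk : k = 1
    · subst hk
      rw [if_pos rfl, if_pos ⟨rfl, rfl⟩]
      push_cast; ring
    · simp [hk]

/-- The `m = 1` factor of the series with `(1-q)⁻¹` removed. -/
def P1 : Ser := (geom 2 1)^22 * geom 4 1

lemma good_P1 : Good P1 := good_mul (pow21 22).1 (geom_good (by omega))

lemma diag_P1 : ∀ k, co P1 k k = if k = 0 then 1 else 0 :=
  fun k => by rw [P1, mul_triv_diag (pow21 22).1 (triv_geom (by omega) (by omega)), (pow21 22).2.1]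

lemma slice_P1 : ∀ k, co P1 (k+1) k = if k = 1 then 22 else 0 :=
  fun k => by
    rw [P1, mul_triv_slice (pow21 22).1 (triv_geom (by omega) (by omega)), (pow21 22).2.2]
    norm_num

/-- slices of `FF 2`. -/
lemma good_FF2 : Good (FF 2) := good_FF (by omega)

lemma diag_FF2 : ∀ k, co (FF 2) k k = if 2 ∣ k then 1 else 0 := by
  intro k
  have h22 : Good (geom (2*2) 2 ^ 22) := (triv_pow (triv_geom (by omega) (by omega)) 22).1
  rw [FF, show 2*2-2 = 2 by norm_num,
    mul_triv_diag (good_mul (geom_good (le_refl 2)) h22) (triv_geom (by omega) (by omega)),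
    mul_triv_diag (geom_good (le_refl 2)) (triv_pow (triv_geom (by omega) (by omega)) 22),
    geom_diag]

lemma slice_FF2 : ∀ k, co (FF 2) (k+1) k = 0 := by
  intro k
  have h22 : Good (geom (2*2) 2 ^ 22) := (triv_pow (triv_geom (by omega) (by omega)) 22).1
  rw [FF, show 2*2-2 = 2 by norm_num,
    mul_triv_slice (good_mul (geom_good (le_refl 2)) h22) (triv_geom (by omega) (by omega)),
    mul_triv_slice (geom_good (le_refl 2)) (triv_pow (triv_geom (by omega) (by omega)) 22),
    geom_slice (le_refl 2), if_neg (by omega)]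

/-- slices of `FF 3`. -/
lemma good_FF3 : Good (FF 3) := good_FF (by omega)

lemma diag_FF3 : ∀ k, co (FF 3) k k = if k = 0 then 1 else 0 := by
  intro k
  have h22 : Good (geom (2*3) 3 ^ 22) := (triv_pow (triv_geom (by omega) (by omega)) 22).1
  rw [FF, show 2*3-2 = 4 by norm_num,
    mul_triv_diag (good_mul (geom_good (by omega)) h22) (triv_geom (by omega) (by omega)),
    mul_triv_diag (geom_good (by omega)) (triv_pow (triv_geom (by omega) (by omega)) 22),
    geom_diag_triv (by omega)]

lemma slice_FF3 : ∀ k, co (FF 3) (k+1) k = if k = 3 then 1 else 0 := by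
  intro k
  have h22 : Good (geom (2*3) 3 ^ 22) := (triv_pow (triv_geom (by omega) (by omega)) 22).1
  rw [FF, show 2*3-2 = 4 by norm_num,
    mul_triv_slice (good_mul (geom_good (by omega)) h22) (triv_geom (by omega) (by omega)),
    mul_triv_slice (geom_good (by omega)) (triv_pow (triv_geom (by omega) (by omega)) 22),
    geom_slice (by omega)]
  by_cases hk : k = 3
  · subst hk; rw [if_pos ⟨rfl, rfl⟩, if_pos rfl]
  · rw [if_neg (fun hc => hk hc.2), if_neg hk]

/-- the truncated product with the `(1-q)⁻¹` factor removed. -/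
def Q (M : ℕ) : Ser := P1 * ∏ m ∈ Finset.Icc 2 M, FF m

lemma Q_three : Q 3 = P1 * FF 2 * FF 3 := by
  rw [Q, show Finset.Icc 2 3 = {2, 3} from rfl, Finset.prod_insert (by decide),
    Finset.prod_singleton, mul_assoc]

lemma good_R2 : Good (P1 * FF 2) := good_mul good_P1 good_FF2

lemma diag_R2 : ∀ k, co (P1 * FF 2) k k = if 2 ∣ k then 1 else 0 := by
  intro k
  rw [co_mul_diag good_P1 good_FF2, Finset.sum_eq_single 0]
  · rw [diag_P1, diag_FF2, if_pos rfl, one_mul, Nat.sub_zero]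
  · intro j hj hne
    rw [diag_P1, if_neg hne, zero_mul]
  · intro h; exact absurd (Finset.mem_range.mpr (by omega)) h

lemma slice_R2 : ∀ k, co (P1 * FF 2) (k+1) k = if 2 ∣ k then 0 else 22 := by
  intro k
  rw [co_mul_slice good_P1 good_FF2, Finset.sum_add_distrib]
  have t1 : ∑ j ∈ range (k+1), co P1 j j * co (FF 2) (k-j+1) (k-j) = 0 := by
    apply Finset.sum_eq_zero
    intro j hj
    rw [slice_FF2, mul_zero]
  have t2 : ∑ j ∈ range (k+1), co P1 (j+1) j * co (FF 2) (k-j) (k-j)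
      = if 2 ∣ k then 0 else 22 := by
    by_cases hk : 1 ≤ k
    · rw [Finset.sum_eq_single 1]
      · rw [slice_P1, if_pos rfl, diag_FF2]
        by_cases h2 : 2 ∣ k
        · rw [if_neg (by omega), if_pos h2]; ring
        · rw [if_pos (by omega), if_neg h2]; ring
      · intro j hj hne
        rw [slice_P1, if_neg hne, zero_mul]
      · intro h; exact absurd (Finset.mem_range.mpr (by omega)) h
    · have hk0 : k = 0 := by omega
      subst hk0
      rw [if_pos ⟨0, rfl⟩]
      apply Finset.sum_eq_zero
      intro j hj
      rw [Finset.mem_range] at hj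
      rw [slice_P1, if_neg (by omega), zero_mul]
  rw [t1, t2, zero_add]

lemma good_Q3 : Good (Q 3) := by rw [Q_three]; exact good_mul good_R2 good_FF3

lemma diag_Q3 : ∀ k, co (Q 3) k k = if 2 ∣ k then 1 else 0 := by
  intro k
  rw [Q_three, co_mul_diag good_R2 good_FF3, Finset.sum_eq_single k]
  · rw [Nat.sub_self, diag_FF3, if_pos rfl, mul_one, diag_R2]
  · intro j hj hne
    rw [Finset.mem_range] at hj
    rw [diag_FF3, if_neg (by omega), mul_zero]
  · intro h; exact absurd (Finset.mem_range.mpr (by omega)) h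

lemma slice_Q3 : ∀ k, co (Q 3) (k+1) k
    = if 2 ∣ k then 0 else if 3 ≤ k then 23 else 22 := by
  intro k
  rw [Q_three, co_mul_slice good_R2 good_FF3, Finset.sum_add_distrib]
  have t1 : ∑ j ∈ range (k+1), co (P1 * FF 2) j j * co (FF 3) (k-j+1) (k-j)
      = if 3 ≤ k ∧ 2 ∣ (k - 3) then 1 else 0 := by
    by_cases hk : 3 ≤ k
    · rw [Finset.sum_eq_single (k - 3)]
      · rw [diag_R2, slice_FF3, show k - (k-3) = 3 by omega, if_pos rfl]
        by_cases h2 : 2 ∣ (k - 3)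
        · rw [if_pos h2, if_pos ⟨hk, h2⟩]; ring
        · rw [if_neg h2, if_neg (fun hc => h2 hc.2)]; ring
      · intro j hj hne
        rw [Finset.mem_range] at hj
        rw [slice_FF3, if_neg (by omega), mul_zero]
      · intro h; exact absurd (Finset.mem_range.mpr (by omega)) h
    · rw [if_neg (fun hc => hk hc.1)]
      apply Finset.sum_eq_zero
      intro j hj
      rw [Finset.mem_range] at hj
      rw [slice_FF3, if_neg (by omega), mul_zero]
  have t2 : ∑ j ∈ range (k+1), co (P1 * FF 2) (j+1) j * co (FF 3) (k-j) (k-j)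
      = if 2 ∣ k then 0 else 22 := by
    rw [Finset.sum_eq_single k]
    · rw [Nat.sub_self, diag_FF3, if_pos rfl, mul_one, slice_R2]
    · intro j hj hne
      rw [Finset.mem_range] at hj
      rw [diag_FF3, if_neg (by omega), mul_zero]
    · intro h; exact absurd (Finset.mem_range.mpr (by omega)) h
  rw [t1, t2]
  rcases Nat.even_or_odd k with he | ho
  · rw [if_pos he.two_dvd, if_neg, if_pos he.two_dvd, add_zero]
    rintro ⟨h3, h2⟩
    obtain ⟨c, hc⟩ := he
    obtain ⟨c', hc'⟩ := h2
    omega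
  · have h2 : ¬ (2 ∣ k) := by
      obtain ⟨c, rfl⟩ := ho; omega
    rw [if_neg h2, if_neg h2]
    by_cases h3 : 3 ≤ k
    · rw [if_pos ⟨h3, by omega⟩, if_pos h3]; norm_num
    · rw [if_neg (fun hc => h3 hc.1), if_neg h3, zero_add]

lemma Q_succ (M : ℕ) (hM : 2 ≤ M + 1) : Q (M + 1) = Q M * FF (M + 1) := by
  rw [Q, Q, Finset.prod_Icc_succ_top hM, mul_assoc]

lemma Qprop : ∀ M, 3 ≤ M → Good (Q M) ∧
    (∀ k, co (Q M) k k = if 2 ∣ k then 1 else 0) ∧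
    (∀ k, co (Q M) (k+1) k = if 2 ∣ k then 0 else if 3 ≤ k then 23 else 22) := by
  intro M hM
  induction M, hM using Nat.le_induction with
  | base => exact ⟨good_Q3, diag_Q3, slice_Q3⟩
  | succ M hM ih =>
    obtain ⟨hg, hd, hs⟩ := ih
    have htriv : Triv (FF (M + 1)) := triv_FF (by omega)
    rw [Q_succ M (by omega)]
    exact ⟨good_mul hg htriv.1,
      fun k => by rw [mul_triv_diag hg htriv, hd],
      fun k => by rw [mul_triv_slice hg htriv, hs]⟩

/-! ### Stability in the truncation bound -/

/-- `φ` is `1` plus terms of `q`-degree at least `m`. -/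
def Qord (m : ℕ) (φ : Ser) : Prop := ∀ i j, co φ i j ≠ 0 → (i = 0 ∧ j = 0) ∨ m ≤ j

lemma qord_geom (a b : ℕ) : Qord b (geom a b) := by
  intro i j h
  rw [co_geom] at h
  by_cases hk : ∃ k, i = k*a ∧ j = k*b
  · obtain ⟨k, rfl, rfl⟩ := hk
    rcases Nat.eq_zero_or_pos k with rfl | hp
    · left; omega
    · right; nlinarith
  · rw [if_neg hk] at h; exact absurd rfl h

lemma qord_mul {m : ℕ} {φ ψ : Ser} (hφ : Qord m φ) (hψ : Qord m ψ) : Qord m (φ * ψ) := by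
  intro α β h
  rw [co_mul] at h
  obtain ⟨i, hi, h⟩ := Finset.exists_ne_zero_of_sum_ne_zero h
  obtain ⟨j, hj, h⟩ := Finset.exists_ne_zero_of_sum_ne_zero h
  rw [Finset.mem_range] at hi hj
  have h1 := hφ i j (left_ne_zero_of_mul h)
  have h2 := hψ (α - i) (β - j) (right_ne_zero_of_mul h)
  omega

lemma qord_pow {m : ℕ} {φ : Ser} (hφ : Qord m φ) (r : ℕ) (hr : 1 ≤ r) : Qord m (φ ^ r) := by
  induction r with
  | zero => omega
  | succ n ih =>
    rcases Nat.eq_zero_or_pos n with rfl | hp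
    · simpa using hφ
    · rw [pow_succ]; exact qord_mul (ih hp) hφ

lemma qord_FF (m : ℕ) : Qord m (FF m) :=
  qord_mul (qord_mul (qord_geom _ _) (qord_pow (qord_geom _ _) 22 (by omega))) (qord_geom _ _)

lemma co_mul_00 (φ ψ : Ser) : co (φ * ψ) 0 0 = co φ 0 0 * co ψ 0 0 := by
  rw [co_mul]
  simp

lemma co_geom_00 (a b : ℕ) : co (geom a b) 0 0 = 1 := by
  rw [co_geom, if_pos ⟨0, by omega, by omega⟩]

lemma co_FF_00 (m : ℕ) : co (FF m) 0 0 = 1 := by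
  have hp : co (geom (2*m) m ^ 22) 0 0 = 1 := by
    induction (22 : ℕ) with
    | zero => simpa using co_one 0 0
    | succ n ih => rw [pow_succ, co_mul_00, ih, co_geom_00, mul_one]
  rw [FF, co_mul_00, co_mul_00, hp, co_geom_00, co_geom_00]
  ring

lemma absorb {m : ℕ} {ψ : Ser} (hord : Qord m ψ) (h00 : co ψ 0 0 = 1)
    (φ : Ser) (i j : ℕ) (hj : j < m) : co (φ * ψ) i j = co φ i j := by
  rw [co_mul, Finset.sum_eq_single i]
  · rw [Finset.sum_eq_single j]
    · rw [Nat.sub_self, Nat.sub_self, h00, mul_one]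
    · intro j' hj' hne
      rw [Finset.mem_range] at hj'
      by_contra h
      have := hord 0 (j - j') (by
        have := right_ne_zero_of_mul h
        rwa [Nat.sub_self] at this)
      omega
    · intro h; exact absurd (Finset.mem_range.mpr (by omega)) h
  · intro i' hi' hne
    rw [Finset.mem_range] at hi'
    apply Finset.sum_eq_zero
    intro j' hj'
    rw [Finset.mem_range] at hj'
    by_contra h
    have := hord (i - i') (j - j') (right_ne_zero_of_mul h)
    omega
  · intro h; exact absurd (Finset.mem_range.mpr (by omega)) h

lemma Q_stab (M M' i j : ℕ) (h1 : 1 ≤ M) (hM : M ≤ M') (hj : j ≤ M) :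
    co (Q M') i j = co (Q M) i j := by
  induction M', hM using Nat.le_induction with
  | base => rfl
  | succ M' hM' ih =>
    rw [Q_succ M' (by omega), absorb (qord_FF (M'+1)) (co_FF_00 (M'+1)) _ i j (by omega)]
    exact ih

/-! ### the `(1-q)⁻¹` factor -/

lemma co_geom01 (i j : ℕ) : co (geom 0 1) i j = if i = 0 then 1 else 0 := by
  rw [co_geom]
  by_cases hi : i = 0
  · subst hi; rw [if_pos ⟨j, by omega, by omega⟩, if_pos rfl]
  · rw [if_neg (by rintro ⟨k, h1, h2⟩; omega), if_neg hi]

lemma co_geom01_mul (ψ : Ser) (α β : ℕ) :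
    co (geom 0 1 * ψ) α β = ∑ j ∈ range (β+1), co ψ α (β - j) := by
  rw [co_mul, Finset.sum_eq_single 0]
  · refine Finset.sum_congr rfl fun j hj => ?_
    rw [co_geom01, if_pos rfl, one_mul, Nat.sub_zero]
  · intro i hi hne
    apply Finset.sum_eq_zero
    intro j hj
    rw [co_geom01, if_neg hne, zero_mul]
  · intro h; exact absurd (Finset.mem_range.mpr (by omega)) h

end

/-- For `b = 22` and every even `n ≥ 4`, the difference between the
coefficient of `tⁿqⁿ` and the coefficient of `tⁿqⁿ⁻²` in Göttsche's series
equals `24`. -/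
theorem stmt8 (n : ℕ) (hn : 4 ≤ n) (hne : Even n) :
    MvPowerSeries.coeff (Finsupp.single 0 n + Finsupp.single 1 n) (Gser 22)
      - MvPowerSeries.coeff
          (Finsupp.single 0 n + Finsupp.single 1 (n - 2)) (Gser 22)
      = 24 := by
  classical
  have coGser : ∀ i j : ℕ, MvPowerSeries.coeff (E i j) (Gser 22)
      = co (∏ m ∈ Finset.Icc 1 (i + j),
          ((1 - tV ^ (2 * m - 2) * qV ^ m)⁻¹ *
            ((1 - tV ^ (2 * m) * qV ^ m)⁻¹) ^ 22 *
            (1 - tV ^ (2 * m + 2) * qV ^ m)⁻¹)) i j := by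
    intro i j
    rw [MvPowerSeries.coeff_apply, Gser, iProd2]
    rw [co, MvPowerSeries.coeff_apply, E_apply0, E_apply1]
    rfl
  have prod_eq : ∀ M : ℕ, 1 ≤ M →
      (∏ m ∈ Finset.Icc 1 M,
        ((1 - tV ^ (2 * m - 2) * qV ^ m)⁻¹ *
          ((1 - tV ^ (2 * m) * qV ^ m)⁻¹) ^ 22 *
          (1 - tV ^ (2 * m + 2) * qV ^ m)⁻¹))
        = geom 0 1 * Q M := by
    intro M hM
    rw [Finset.prod_congr rfl (fun m hm => FF_eq m (Finset.mem_Icc.mp hm).1)]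
    have hins : Finset.Icc 1 M = insert 1 (Finset.Icc 2 M) := by
      ext x
      simp only [Finset.mem_Icc, Finset.mem_insert]
      omega
    rw [hins, Finset.prod_insert (by simp)]
    have hFF1 : FF 1 = geom 0 1 * ((geom 2 1) ^ 22 * geom 4 1) := by
      rw [FF]
      norm_num [mul_assoc]
    rw [hFF1, Q, P1, mul_assoc]
  -- the two coefficients
  have hc1 : MvPowerSeries.coeff (Finsupp.single 0 n + Finsupp.single 1 n) (Gser 22)
      = ∑ j ∈ range (n + 1), co (Q (n + n)) n (n - j) := by
    have : (Finsupp.single 0 n + Finsupp.single 1 n : Fin 2 →₀ ℕ) = E n n := rfl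
    rw [this, coGser, prod_eq (n + n) (by omega), co_geom01_mul]
  have hc2 : MvPowerSeries.coeff (Finsupp.single 0 n + Finsupp.single 1 (n - 2)) (Gser 22)
      = ∑ j ∈ range (n - 2 + 1), co (Q (n + (n - 2))) n (n - 2 - j) := by
    have : (Finsupp.single 0 n + Finsupp.single 1 (n - 2) : Fin 2 →₀ ℕ) = E n (n - 2) := rfl
    rw [this, coGser, prod_eq (n + (n - 2)) (by omega), co_geom01_mul]
  set M0 := n + (n - 2) with hM0
  have hM03 : 3 ≤ M0 := by omega
  -- stabilize the first sum
  have hc1' : MvPowerSeries.coeff (Finsupp.single 0 n + Finsupp.single 1 n) (Gser 22)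
      = ∑ j ∈ range (n + 1), co (Q M0) n (n - j) := by
    rw [hc1]
    refine Finset.sum_congr rfl fun j hj => ?_
    exact Q_stab M0 (n + n) n (n - j) (by omega) (by omega) (by omega)
  obtain ⟨hgood, hdiag, hslice⟩ := Qprop M0 hM03
  -- split off the top two terms of the first sum
  have hsplit : ∑ j ∈ range (n + 1), co (Q M0) n (n - j)
      = (∑ j ∈ range (n - 1), co (Q M0) n (n - 2 - j))
        + co (Q M0) n (n - 1) + co (Q M0) n n := by
    have hn1 : n + 1 = (n - 1) + 1 + 1 := by omega
    rw [hn1, Finset.sum_range_succ', Finset.sum_range_succ']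
    have : ∀ j ∈ range (n - 1),
        co (Q M0) n (n - (j + 1 + 1)) = co (Q M0) n (n - 2 - j) := by
      intro j hj
      congr 1
      omega
    rw [Finset.sum_congr rfl this]
    norm_num
  have hdiagval : co (Q M0) n n = 1 := by
    rw [hdiag, if_pos hne.two_dvd]
  have hsliceval : co (Q M0) n (n - 1) = 23 := by
    have h := hslice (n - 1)
    rw [show n - 1 + 1 = n by omega] at h
    have hodd : ¬ (2 ∣ (n - 1)) := by
      obtain ⟨c, rfl⟩ := hne
      omega
    rw [h, if_neg hodd, if_pos (by omega)]
  have hrange : n - 2 + 1 = n - 1 := by omega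
  rw [hc1', hc2, hsplit, hdiagval, hsliceval, hrange]
  ring
end
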